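/- arXiv:2108.01430 — 5 statements merged into one kernel-verified Lean document; each statement's English description precedes it below -/
import Mathlib

section
/- Let T be a finite tree rooted at a vertex ρ and let 𝒫 be a finite family of simple paths in T. Let x : V(T) → ℝ satisfy 0 ≤ x_v ≤ 1 for every vertex v and Σ_{v ∈ V(P)} x_v ≥ 1 for every P ∈ 𝒫. Set x̂_v = min(2·x_v, 1) for every v, and let d_v = Σ_{u ∈ V(Q_v)} x̂_u, where Q_v is the unique path in T from ρ to v. For r ∈ [0,1) define the bin B_r = { v ∈ V(T) : there exists an integer q with d_v − x̂_v ≤ q + r < d_v }. Then for every r ∈ [0,1), the bin B_r intersects the vertex set of every path in 𝒫. -/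
/-! If a path `P` misses the bin `B_r`, no point of `ℤ + r` lies in an interval
`[d_v - x̂_v, d_v)` with `v ∈ P`. Along an edge of `T` these intervals share an endpoint, so all of
them lie in one window `(c + r - 1, c + r]` with `c ∈ ℤ`. Then `x̂_v < 1`, i.e. `x̂_v = 2 x_v`, on
`P`, so the `x̂`-length of `P` is at least `2`. But `P` climbs from one end to its topmost vertex
`v₀` and descends to the other, so its `x̂`-length is at most
`(d_{e₁} - (d_{v₀} - x̂_{v₀})) + (d_{e₂} - (d_{v₀} - x̂_{v₀}))`, and each summand is `< 1`. -/

open SimpleGraph Walk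

def bin {V : Type*} (D w : V → ℝ) (r : ℝ) : Set V :=
  {v | ∃ q : ℤ, D v - w v ≤ q + r ∧ (q : ℝ) + r < D v}

theorem sub_mem_Ioc_iff_of_notMem_bin {V : Type*} {D w : V → ℝ} {r : ℝ} {v : V} (hw : 0 ≤ w v)
    (hv : v ∉ bin D w r) (c : ℤ) :
    D v - w v ∈ Set.Ioc ((c : ℝ) + r - 1) (c + r) ↔ D v ∈ Set.Ioc ((c : ℝ) + r - 1) (c + r) := by
  constructor
  · rintro ⟨h₁, h₂⟩
    exact ⟨by linarith, not_lt.1 fun h => hv ⟨c, h₂, h⟩⟩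
  · rintro ⟨h₁, h₂⟩
    refine ⟨lt_of_not_ge fun h => hv ⟨c - 1, ?_, ?_⟩, by linarith⟩ <;> push_cast <;> linarith

namespace SimpleGraph

variable {V : Type*} {G : SimpleGraph V} {ρ : V} {Q : ∀ v, G.Walk ρ v}

theorem IsAcyclic.eq_concat_or_eq_concat_of_adj (hG : G.IsAcyclic) (hQ : ∀ v, (Q v).IsPath)
    {u v : V} (h : G.Adj u v) : Q v = (Q u).concat h ∨ Q u = (Q v).concat h.symm := by
  by_cases hv : v ∈ (Q u).support
  · exact .inr (hG.path_concat (hQ v) (hQ u) h.symm hv)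
  · exact .inl (hG.path_concat (hQ u) (hQ v) h
      (hG.mem_support_of_ne_mem_support_of_adj_of_isPath (hQ v) (hQ u) h.symm hv))

theorem IsAcyclic.eq_concat_of_eq_concat_of_ne (hG : G.IsAcyclic) (hQ : ∀ v, (Q v).IsPath)
    {a u w : V} (ha : G.Adj a u) (hu : Q u = (Q a).concat ha) (h : G.Adj u w) (hwa : w ≠ a) :
    Q w = (Q u).concat h :=
  (hG.eq_concat_or_eq_concat_of_adj hQ h).resolve_right
    fun hw => hwa (concat_inj (hu.symm.trans hw)).1.symm

section WeightedDepth

variable [DecidableEq V]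

def weightedDepth (Q : ∀ v, G.Walk ρ v) (w : V → ℝ) (v : V) : ℝ :=
  ∑ u ∈ (Q v).support.toFinset, w u

variable {w : V → ℝ}

theorem weightedDepth_eq_add_of_eq_concat (hQ : ∀ v, (Q v).IsPath) {u v : V} (h : G.Adj u v)
    (hv : Q v = (Q u).concat h) : weightedDepth Q w v = weightedDepth Q w u + w v := by
  have hvu : v ∉ (Q u).support := ((concat_isPath_iff h).1 (hv ▸ hQ v)).2
  rw [weightedDepth, weightedDepth, hv, support_concat, List.toFinset_append,
    List.toFinset_cons, List.toFinset_nil, insert_empty_eq, Finset.union_singleton,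
    Finset.sum_insert (List.mem_toFinset.not.2 hvu), add_comm]

theorem IsAcyclic.weightedDepth_eq_add_or_eq_add_of_adj (hG : G.IsAcyclic)
    (hQ : ∀ v, (Q v).IsPath) {u v : V} (h : G.Adj u v) :
    weightedDepth Q w v = weightedDepth Q w u + w v ∨
      weightedDepth Q w u = weightedDepth Q w v + w u :=
  (hG.eq_concat_or_eq_concat_of_adj hQ h).imp (weightedDepth_eq_add_of_eq_concat hQ h)
    (weightedDepth_eq_add_of_eq_concat hQ h.symm)

/-- A path that steps from `a` down to its child `u` and does not return to `a` keeps descending. -/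
theorem IsAcyclic.sum_support_eq_of_eq_concat (hG : G.IsAcyclic) (hQ : ∀ v, (Q v).IsPath)
    {a u b : V} (ha : G.Adj a u) (hu : Q u = (Q a).concat ha) (W : G.Walk u b) (hW : W.IsPath)
    (haW : a ∉ W.support) :
    ∑ v ∈ W.support.toFinset, w v = weightedDepth Q w b - weightedDepth Q w u + w u := by
  induction W generalizing a with
  | nil => simp
  | @cons u t b h W ih =>
    rw [support_cons, List.mem_cons, not_or] at haW
    rw [cons_isPath_iff] at hW
    have ht : Q t = (Q u).concat h :=
      hG.eq_concat_of_eq_concat_of_ne hQ ha hu h fun hta => haW.2 (hta ▸ W.start_mem_support)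
    rw [support_cons, List.toFinset_cons, Finset.sum_insert (List.mem_toFinset.not.2 hW.2),
      ih h ht hW.1 hW.2, weightedDepth_eq_add_of_eq_concat hQ h ht]
    ring

theorem IsAcyclic.sum_support_le (hG : G.IsAcyclic) (hQ : ∀ v, (Q v).IsPath)
    (hw : ∀ v, 0 ≤ w v) {a b : V} (W : G.Walk a b) (hW : W.IsPath) {y : ℝ}
    (hy : ∀ v ∈ W.support, y ≤ weightedDepth Q w v - w v) :
    ∑ v ∈ W.support.toFinset, w v ≤ (weightedDepth Q w a - y) + (weightedDepth Q w b - y) := by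
  induction W with
  | @nil a =>
    have := hy _ (start_mem_support _)
    simp only [support_nil, List.toFinset_cons, List.toFinset_nil, insert_empty_eq,
      Finset.sum_singleton]
    linarith [hw a]
  | @cons a u b h W ih =>
    rw [cons_isPath_iff] at hW
    have hya := hy a (start_mem_support _)
    rw [support_cons, List.toFinset_cons, Finset.sum_insert (List.mem_toFinset.not.2 hW.2)]
    rcases hG.eq_concat_or_eq_concat_of_adj hQ h with hu | ha
    · rw [hG.sum_support_eq_of_eq_concat hQ h hu W hW.1 hW.2,
        weightedDepth_eq_add_of_eq_concat hQ h hu]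
      linarith [hw a]
    · have := ih hW.1 fun v hv => hy v (List.mem_cons_of_mem _ hv)
      rw [weightedDepth_eq_add_of_eq_concat hQ h.symm ha]
      linarith

theorem IsAcyclic.exists_window_of_forall_notMem_bin (hG : G.IsAcyclic)
    (hQ : ∀ v, (Q v).IsPath) (hw : ∀ v, 0 ≤ w v) {r : ℝ} {s t : V} (W : G.Walk s t)
    (hW : ∀ v ∈ W.support, v ∉ bin (weightedDepth Q w) w r) :
    ∃ c : ℤ, ∀ v ∈ W.support,
      weightedDepth Q w v - w v ∈ Set.Ioc ((c : ℝ) + r - 1) (c + r) ∧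
        weightedDepth Q w v ∈ Set.Ioc ((c : ℝ) + r - 1) (c + r) := by
  induction W with
  | @nil s =>
    refine ⟨⌈weightedDepth Q w s - r⌉, ?_⟩
    simp only [support_nil, List.mem_singleton, forall_eq]
    have hs : weightedDepth Q w s ∈ Set.Ioc ((⌈weightedDepth Q w s - r⌉ : ℝ) + r - 1)
        (⌈weightedDepth Q w s - r⌉ + r) :=
      ⟨by linarith [Int.ceil_lt_add_one (weightedDepth Q w s - r)],
        by linarith [Int.le_ceil (weightedDepth Q w s - r)]⟩
    exact ⟨(sub_mem_Ioc_iff_of_notMem_bin (hw s) (hW s (start_mem_support _)) _).2 hs, hs⟩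
  | @cons s u t h W ih =>
    obtain ⟨c, hc⟩ := ih fun v hv => hW v (List.mem_cons_of_mem _ hv)
    have hs := sub_mem_Ioc_iff_of_notMem_bin (hw s) (hW s (start_mem_support _)) c
    obtain ⟨hu₁, hu₂⟩ := hc u (start_mem_support _)
    -- the intervals of adjacent vertices share an endpoint
    have hsc : weightedDepth Q w s ∈ Set.Ioc ((c : ℝ) + r - 1) (c + r) := by
      rcases hG.weightedDepth_eq_add_or_eq_add_of_adj hQ h with hu | hs'
      · rwa [hu, add_sub_cancel_right] at hu₁
      · rwa [← hs, hs', add_sub_cancel_right]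
    refine ⟨c, fun v hv => ?_⟩
    rcases List.mem_cons.1 hv with rfl | hv
    · exact ⟨hs.2 hsc, hsc⟩
    · exact hc v hv

end WeightedDepth

end SimpleGraph

theorem tree_bins_are_multicuts_general
    {V : Type*} [DecidableEq V]
    (T : SimpleGraph V) (hT : T.IsTree) (ρ : V)
    {ι : Type*} (e₁ e₂ : ι → V)
    (P : ∀ i : ι, T.Walk (e₁ i) (e₂ i)) (hP : ∀ i, (P i).IsPath)
    (x : V → ℝ) (hx0 : ∀ v, 0 ≤ x v)
    (hcov : ∀ i, 1 ≤ ∑ v ∈ (P i).support.toFinset, x v)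
    (xh : V → ℝ) (hxh : ∀ v, xh v = min (2 * x v) 1)
    (Q : ∀ v : V, T.Walk ρ v) (hQ : ∀ v, (Q v).IsPath)
    (d : V → ℝ) (hd : ∀ v, d v = ∑ u ∈ (Q v).support.toFinset, xh u)
    (r : ℝ) :
    ∀ i, ∃ v ∈ (P i).support, ∃ q : ℤ, d v - xh v ≤ q + r ∧ (q : ℝ) + r < d v := by
  intro i
  by_contra hmiss
  obtain rfl : d = weightedDepth Q xh := funext hd
  have hxh0 (v : V) : 0 ≤ xh v := (hxh v).symm ▸ le_min (by linarith [hx0 v]) zero_le_one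
  obtain ⟨c, hc⟩ := hT.isAcyclic.exists_window_of_forall_notMem_bin hQ hxh0 (P i)
    fun v hv hvB => hmiss ⟨v, hv, hvB⟩
  simp only [Set.mem_Ioc] at hc
  have hsum : 2 ≤ ∑ v ∈ (P i).support.toFinset, xh v := calc
    2 ≤ 2 * ∑ v ∈ (P i).support.toFinset, x v := by linarith [hcov i]
    _ = ∑ v ∈ (P i).support.toFinset, xh v := by
      rw [Finset.mul_sum]
      refine Finset.sum_congr rfl fun v hv => ?_
      have hlt : xh v < 1 := by linarith [hc v (List.mem_toFinset.1 hv)]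
      rw [hxh] at hlt ⊢
      exact (min_eq_left ((min_lt_iff.1 hlt).resolve_right (lt_irrefl 1)).le).symm
  obtain ⟨v₀, hv₀, hmin⟩ := (P i).support.toFinset.exists_min_image
    (fun v => weightedDepth Q xh v - xh v) ⟨e₁ i, List.mem_toFinset.2 (P i).start_mem_support⟩
  have hle := hT.isAcyclic.sum_support_le hQ hxh0 (P i) (hP i)
    fun v hv => hmin v (List.mem_toFinset.2 hv)
  linarith [hc _ (P i).start_mem_support, hc _ (P i).end_mem_support,
    hc v₀ (List.mem_toFinset.1 hv₀)]

/-- In a tree `T` rooted at `ρ`, with a fractional multicut solution `x`,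
`x̂ = min(2x, 1)`, and `d_v` the `x̂`-length of the unique path from `ρ` to `v`, every bin
`B_r = {v : ∃ q ∈ ℤ, d_v − x̂_v ≤ q + r < d_v}` (for `r ∈ [0,1)`) intersects the vertex set
of every path in the family. -/
theorem tree_bins_are_multicuts
    {V : Type*} [Fintype V] [DecidableEq V]
    (T : SimpleGraph V) (hT : T.IsTree) (ρ : V)
    {ι : Type*} [Fintype ι] (e₁ e₂ : ι → V)
    (P : ∀ i : ι, T.Walk (e₁ i) (e₂ i)) (hP : ∀ i, (P i).IsPath)
    (x : V → ℝ) (hx0 : ∀ v, 0 ≤ x v) (hx1 : ∀ v, x v ≤ 1)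
    (hcov : ∀ i, 1 ≤ ∑ v ∈ (P i).support.toFinset, x v)
    (xh : V → ℝ) (hxh : ∀ v, xh v = min (2 * x v) 1)
    (Q : ∀ v : V, T.Walk ρ v) (hQ : ∀ v, (Q v).IsPath)
    (d : V → ℝ) (hd : ∀ v, d v = ∑ u ∈ (Q v).support.toFinset, xh u)
    (r : ℝ) (hr : r ∈ Set.Ico (0 : ℝ) 1) :
    ∀ i, ∃ v ∈ (P i).support, ∃ q : ℤ, d v - xh v ≤ q + r ∧ (q : ℝ) + r < d v :=
  tree_bins_are_multicuts_general T hT ρ e₁ e₂ P hP x hx0 hcov xh hxh Q hQ d hd r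
end

section
/- Let V be a finite set with weights w : V → ℕ, let x̂ : V → ℝ satisfy 0 ≤ x̂_v ≤ 1 for every v ∈ V, and let d : V → ℝ be arbitrary. For r ∈ [0,1) define the bin B_r = { v ∈ V : there exists an integer q with d_v − x̂_v ≤ q + r < d_v }. Then there exists r* ∈ [0,1) such that Σ_{v ∈ B_{r*}} w(v) ≤ Σ_{v ∈ V} w(v)·x̂_v. -/
/-!
For a single item, the set of shifts `r` putting it in the bin `B_r` is the union of the
translates `[d - x̂ - q, d - q)`, `q ∈ ℤ`, hence invariant under `r ↦ r + 1`. Its measure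
inside the fundamental domain `[0, 1)` therefore equals its measure inside `[d - x̂, d - x̂ + 1)`,
where it is exactly `[d - x̂, d)`, of length `x̂`. So the weight of `B_r` has mean
`∑ w(v) x̂_v` over `r ∈ [0, 1)`, and some `r` is no heavier than that mean.
-/

open MeasureTheory Set

theorem isAddFundamentalDomain_Ico {T : ℝ} (hT : 0 < T) (t : ℝ)
    (μ : Measure ℝ := by volume_tac) :
    IsAddFundamentalDomain (AddSubgroup.zmultiples T) (Ico t (t + T)) μ := by
  refine IsAddFundamentalDomain.mk' nullMeasurableSet_Ico fun x => ?_
  have : Function.Bijective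
      (codRestrict (fun n : ℤ => n • T) (AddSubgroup.zmultiples T) (by simp)) :=
    (Equiv.ofInjective (fun n : ℤ => n • T) (zsmul_left_strictMono hT).injective).bijective
  refine this.existsUnique_iff.2 ?_
  simpa only [add_comm x] using! existsUnique_add_zsmul_mem_Ico hT x t

/-- The shifts `r` for which an item with `x̂_v = x` and `d_v = d` lies in the bin `B_r`. -/
def binShifts (x d : ℝ) : Set ℝ :=
  {r | ∃ q : ℤ, d - x ≤ q + r ∧ (q : ℝ) + r < d}

namespace binShifts

variable {x d : ℝ}

theorem eq_iUnion (x d : ℝ) : binShifts x d = ⋃ q : ℤ, Ico (d - x - q) (d - q) := by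
  ext r
  simp only [binShifts, mem_ofPred_eq, mem_iUnion, mem_Ico]
  refine exists_congr fun q => ?_
  constructor <;> rintro ⟨h₁, h₂⟩ <;> constructor <;> linarith

theorem measurableSet (x d : ℝ) : MeasurableSet (binShifts x d) := by
  rw [eq_iUnion]
  exact .iUnion fun _ => measurableSet_Ico

theorem vadd_preimage (g : AddSubgroup.zmultiples (1 : ℝ)) :
    (g +ᵥ ·) ⁻¹' binShifts x d = binShifts x d := by
  obtain ⟨_, n, rfl⟩ := g
  ext r
  simp only [binShifts, mem_preimage, mem_ofPred_eq, AddSubgroup.vadd_def, vadd_eq_add,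
    zsmul_eq_mul, mul_one]
  constructor
  · rintro ⟨q, h₁, h₂⟩
    exact ⟨q + n, by push_cast; linarith, by push_cast; linarith⟩
  · rintro ⟨q, h₁, h₂⟩
    exact ⟨q - n, by push_cast; linarith, by push_cast; linarith⟩

theorem inter_Ico (hx : x ≤ 1) : binShifts x d ∩ Ico (d - x) (d - x + 1) = Ico (d - x) d := by
  ext r
  simp only [binShifts, mem_inter_iff, mem_ofPred_eq, mem_Ico]
  constructor
  · rintro ⟨⟨q, h₁, h₂⟩, hr₁, hr₂⟩
    -- `r` lies in a window of length `1` starting at `d - x`, which pins `q` to `0`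
    obtain rfl : q = 0 := by
      have : q < 1 := by exact_mod_cast (by linarith : (q : ℝ) < 1)
      have : -1 < q := by exact_mod_cast (by linarith : (-1 : ℝ) < q)
      omega
    exact ⟨hr₁, by simpa using h₂⟩
  · rintro ⟨hr₁, hr₂⟩
    exact ⟨⟨0, by simpa using hr₁, by simpa using hr₂⟩, hr₁, by linarith⟩

theorem volume_inter_Ico_zero_one (hx : x ≤ 1) :
    volume (binShifts x d ∩ Ico 0 1) = ENNReal.ofReal x := by
  have h := (isAddFundamentalDomain_Ico one_pos 0).measure_set_eq
    (isAddFundamentalDomain_Ico one_pos (d - x)) (measurableSet x d) vadd_preimage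
  rw [zero_add] at h
  rw [h, inter_Ico hx, Real.volume_Ico, sub_sub_cancel]

theorem integrableOn_indicator_Ico (x d c : ℝ) :
    IntegrableOn ((binShifts x d).indicator fun _ => c) (Ico 0 1) :=
  (integrableOn_const measure_Ico_lt_top.ne).indicator (measurableSet x d)

end binShifts

section binWeight

variable {V : Type*} [Fintype V] (w x d : V → ℝ)

/-- The weight `∑_{v ∈ B_r} w(v)` of the bin `B_r`. -/
noncomputable def binWeight (r : ℝ) : ℝ :=
  ∑ v, (binShifts (x v) (d v)).indicator (fun _ => w v) r

theorem integrableOn_binWeight : IntegrableOn (binWeight w x d) (Ico 0 1) :=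
  integrable_finsetSum _ fun _ _ => binShifts.integrableOn_indicator_Ico _ _ _

theorem setIntegral_binWeight (hx₀ : ∀ v, 0 ≤ x v) (hx₁ : ∀ v, x v ≤ 1) :
    ∫ r in Ico 0 1, binWeight w x d r = ∑ v, w v * x v := by
  unfold binWeight
  rw [integral_finsetSum _ fun _ _ => binShifts.integrableOn_indicator_Ico _ _ _]
  refine Finset.sum_congr rfl fun v _ => ?_
  rw [integral_indicator_const _ (binShifts.measurableSet _ _),
    measureReal_restrict_apply (binShifts.measurableSet _ _), measureReal_def,
    binShifts.volume_inter_Ico_zero_one (hx₁ v), ENNReal.toReal_ofReal (hx₀ v), smul_eq_mul,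
    mul_comm]

end binWeight

open Classical in
/-- Averaging over `r ∈ [0,1)`: there is a bin `B_{r*}` whose weight is at
most `Σ_v w(v)·x̂(v)`, where `B_r = {v : ∃ q ∈ ℤ, d_v − x̂_v ≤ q + r < d_v}`. -/
theorem exists_light_bin
    {V : Type*} [Fintype V]
    (w : V → ℕ) (x d : V → ℝ)
    (hx0 : ∀ v, 0 ≤ x v) (hx1 : ∀ v, x v ≤ 1) :
    ∃ r ∈ Set.Ico (0 : ℝ) 1,
      (∑ v : V, if ∃ q : ℤ, d v - x v ≤ q + r ∧ (q : ℝ) + r < d v then (w v : ℝ) else 0)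
        ≤ ∑ v : V, (w v : ℝ) * x v := by
  obtain ⟨r, hr, hle⟩ := exists_le_setAverage (by simp) (by simp)
    (integrableOn_binWeight (fun v => (w v : ℝ)) x d)
  refine ⟨r, hr, ?_⟩
  calc _ = binWeight (fun v => (w v : ℝ)) x d r := rfl
    _ ≤ ⨍ s in Ico 0 1, binWeight (fun v => (w v : ℝ)) x d s := hle
    _ = ∑ v, (w v : ℝ) * x v := by
      rw [setAverage_eq, setIntegral_binWeight _ _ _ hx0 hx1]
      simp
end

section
/- Let F be a forest and let 𝒫 be a finite family of simple paths in F. If x : V(F) → ℝ satisfies 0 ≤ x_v ≤ 1 for every vertex v and Σ_{v ∈ V(P)} x_v ≥ 1 for every P ∈ 𝒫, then there exists a set S ⊆ V(F) with S ∩ V(P) ≠ ∅ for every P ∈ 𝒫 and |S| ≤ Σ_{v ∈ V(F)} x_v. In particular, in the unweighted case the multicut LP on a forest has an integral optimal solution. -/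
/-!
Root every component of the forest and call the *apex* of a path its vertex closest to the root.
From any vertex of a path, the way to the root stays on the path until it reaches the apex. Hence,
if two paths meet, the way to the root from a common vertex passes through both apexes, the deeper
one first, and so the deeper apex lies on the other path. Greedily taking the path with the deepest
apex, putting its apex into `S` and discarding every path through that apex therefore selects
pairwise vertex-disjoint paths, one for each vertex of `S`; each of them carries `x`-weight at
least `1`, so `|S| ≤ Σ x`.
-/

open SimpleGraph Walk Finset

theorem Finset.exists_pairwiseDisjoint_subfamily_of_apex_mem {ι V β : Type*} [LinearOrder β]
    (s : ι → Finset V) (apex : ι → V) (rank : ι → β) (hapex : ∀ i, apex i ∈ s i)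
    (hmeet : ∀ i j, ¬Disjoint (s i) (s j) → rank j ≤ rank i → apex i ∈ s j) (A : Finset ι) :
    ∃ T ⊆ A, (T : Set ι).PairwiseDisjoint s ∧ ∀ j ∈ A, ∃ t ∈ T, apex t ∈ s j := by
  classical
  induction A using Finset.strongInduction with
  | H A ih =>
  rcases A.eq_empty_or_nonempty with rfl | hA
  · exact ⟨∅, empty_subset _, by simp, by simp⟩
  obtain ⟨i, hi, hmax⟩ := A.exists_max_image rank hA
  obtain ⟨T, hTA, hT, hcover⟩ :=
    ih (A.filter (apex i ∉ s ·)) (filter_ssubset.2 ⟨i, hi, not_not.2 (hapex i)⟩)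
  have hdisj : ∀ t ∈ T, i ≠ t → Disjoint (s i) (s t) := fun t ht _ => by
    obtain ⟨htA, hnot⟩ := mem_filter.1 (hTA ht)
    by_contra h
    exact hnot (hmeet i t h (hmax t htA))
  refine ⟨insert i T, insert_subset hi (hTA.trans (filter_subset _ _)), ?_, fun j hj => ?_⟩
  · rw [coe_insert]
    exact hT.insert hdisj
  by_cases hij : apex i ∈ s j
  · exact ⟨i, mem_insert_self _ _, hij⟩
  · obtain ⟨t, ht, h⟩ := hcover j (mem_filter.2 ⟨hj, hij⟩)
    exact ⟨t, mem_insert_of_mem ht, h⟩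

theorem Finset.card_le_sum_of_pairwiseDisjoint {ι V R : Type*} [Fintype V]
    [AddCommMonoidWithOne R] [PartialOrder R] [IsOrderedAddMonoid R]
    {T : Finset ι} {s : ι → Finset V} (hT : (T : Set ι).PairwiseDisjoint s) {x : V → R}
    (hx : ∀ v, 0 ≤ x v) (hs : ∀ t ∈ T, 1 ≤ ∑ v ∈ s t, x v) : (T.card : R) ≤ ∑ v, x v := by
  classical
  calc (T.card : R) = ∑ _t ∈ T, (1 : R) := by simp
    _ ≤ ∑ t ∈ T, ∑ v ∈ s t, x v := sum_le_sum hs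
    _ = ∑ v ∈ T.biUnion s, x v := (sum_biUnion hT).symm
    _ ≤ ∑ v, x v := sum_le_sum_of_subset_of_nonneg (subset_univ _) fun v _ _ => hx v

namespace SimpleGraph

variable {V : Type*} {G : SimpleGraph V}

lemma IsAcyclic.eq_of_isPath (hG : G.IsAcyclic) {u v : V} {p q : G.Walk u v} (hp : p.IsPath)
    (hq : q.IsPath) : p = q :=
  Subtype.mk.inj ((hG.subsingleton_path u v).elim ⟨p, hp⟩ ⟨q, hq⟩)

lemma IsAcyclic.dist_eq_length (hG : G.IsAcyclic) {u v : V} {p : G.Walk u v} (hp : p.IsPath) :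
    G.dist u v = p.length := by
  obtain ⟨q, hq, hlen⟩ := Reachable.exists_path_of_dist ⟨p⟩
  rw [← hlen, hG.eq_of_isPath hp hq]

noncomputable def depth (G : SimpleGraph V) (v : V) : ℕ :=
  G.dist v (G.connectedComponentMk v).out

lemma depth_eq_dist_out {v w : V} (h : G.Reachable v w) :
    G.depth v = G.dist v (G.connectedComponentMk w).out := by
  rw [depth, ConnectedComponent.sound h]

lemma reachable_connectedComponentMk_out (v : V) : G.Reachable v (G.connectedComponentMk v).out :=
  (ConnectedComponent.exact (G.connectedComponentMk v).out_eq).symm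

variable [DecidableEq V]

lemma Walk.exists_isPath_support_subset {s t u w : V} (W : G.Walk s t) (hu : u ∈ W.support)
    (hw : w ∈ W.support) : ∃ p : G.Walk u w, p.IsPath ∧ p.support ⊆ W.support := by
  let q := (W.takeUntil u hu).reverse.append (W.takeUntil w hw)
  refine ⟨q.bypass, q.bypass_isPath, fun x hx => ?_⟩
  have hx := q.support_bypass_subset_support hx
  rw [support_append, support_reverse, List.mem_append, List.mem_reverse] at hx
  rcases hx with h | h
  · exact W.support_takeUntil_subset_support hu h
  · exact W.support_takeUntil_subset_support hw (List.mem_of_mem_tail h)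

lemma IsAcyclic.dist_lt_of_mem_support (hG : G.IsAcyclic) {u v w : V} {p : G.Walk u v}
    (hp : p.IsPath) (hw : w ∈ p.support) (hwu : w ≠ u) : G.dist w v < G.dist u v := by
  have hsplit : (p.takeUntil w hw).length + (p.dropUntil w hw).length = p.length := by
    rw [← length_append, take_spec]
  have hpos : (p.takeUntil w hw).length ≠ 0 := fun h => hwu (eq_of_length_eq_zero h).symm
  rw [hG.dist_eq_length hp, hG.dist_eq_length (hp.dropUntil hw)]
  omega

lemma IsAcyclic.exists_eq_append_of_forall_dist_le (hG : G.IsAcyclic) {s t v a r : V}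
    {W : G.Walk s t} (hv : v ∈ W.support) (ha : a ∈ W.support)
    (hmin : ∀ u ∈ W.support, G.dist a r ≤ G.dist u r) {p : G.Walk v r} (hp : p.IsPath) :
    ∃ (seg : G.Walk v a) (q : G.Walk a r), seg.support ⊆ W.support ∧ q.IsPath ∧
      p = seg.append q := by
  obtain ⟨seg, hseg, hsub⟩ := W.exists_isPath_support_subset hv ha
  set q := (seg.reverse.append p).bypass
  have hq : q.IsPath := bypass_isPath _
  have hq_nodup := hq.support_nodup
  rw [← cons_tail_support, List.nodup_cons] at hq_nodup
  have happ : (seg.append q).IsPath := by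
    rw [isPath_def, support_append]
    refine hseg.support_nodup.append hq_nodup.2 fun u hu hu' => ?_
    have hua : u ≠ a := by rintro rfl; exact hq_nodup.1 hu'
    have hlt := hG.dist_lt_of_mem_support hq (List.mem_of_mem_tail hu') hua
    exact absurd (hmin u (hsub hu)) (not_le.2 hlt)
  exact ⟨seg, q, hsub, hq, hG.eq_of_isPath hp happ⟩

lemma IsAcyclic.mem_support_of_forall_dist_le (hG : G.IsAcyclic) {s₁ t₁ s₂ t₂ v a b r : V}
    {W₁ : G.Walk s₁ t₁} {W₂ : G.Walk s₂ t₂} (hv₁ : v ∈ W₁.support) (hv₂ : v ∈ W₂.support)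
    (ha : a ∈ W₁.support) (hb : b ∈ W₂.support)
    (ha_min : ∀ u ∈ W₁.support, G.dist a r ≤ G.dist u r)
    (hb_min : ∀ u ∈ W₂.support, G.dist b r ≤ G.dist u r)
    (hba : G.dist b r ≤ G.dist a r) (hvr : G.Reachable v r) : a ∈ W₂.support := by
  obtain ⟨p, hp, -⟩ := hvr.exists_path_of_dist
  obtain ⟨seg, q, -, -, rfl⟩ := hG.exists_eq_append_of_forall_dist_le hv₁ ha ha_min hp
  obtain ⟨seg', q', hsub', hq', hpq'⟩ := hG.exists_eq_append_of_forall_dist_le hv₂ hb hb_min hp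
  have hap : a ∈ (seg'.append q').support := by
    rw [← hpq']
    exact support_subset_support_append_right _ _ (start_mem_support _)
  rcases (mem_support_append_iff _ _).1 hap with h | h
  · exact hsub' h
  · by_cases hab : a = b
    · exact hab ▸ hb
    · exact absurd hba (not_le.2 (hG.dist_lt_of_mem_support hq' h hab))

lemma IsAcyclic.mem_support_of_forall_depth_le (hG : G.IsAcyclic) {s₁ t₁ s₂ t₂ v a b : V}
    {W₁ : G.Walk s₁ t₁} {W₂ : G.Walk s₂ t₂} (hv₁ : v ∈ W₁.support) (hv₂ : v ∈ W₂.support)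
    (ha : a ∈ W₁.support) (hb : b ∈ W₂.support)
    (ha_min : ∀ u ∈ W₁.support, G.depth a ≤ G.depth u)
    (hb_min : ∀ u ∈ W₂.support, G.depth b ≤ G.depth u)
    (hba : G.depth b ≤ G.depth a) : a ∈ W₂.support := by
  have hdepth : ∀ {s t : V} (W : G.Walk s t), v ∈ W.support → ∀ u ∈ W.support,
      G.depth u = G.dist u (G.connectedComponentMk v).out := fun W hv u hu =>
    have ⟨p, _⟩ := W.exists_isPath_support_subset hu hv
    depth_eq_dist_out ⟨p⟩
  simp only [hdepth W₁ hv₁ _ ha, hdepth W₂ hv₂ _ hb] at hba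
  refine hG.mem_support_of_forall_dist_le hv₁ hv₂ ha hb (fun u hu => ?_) (fun u hu => ?_) hba
    (reachable_connectedComponentMk_out v)
  · simpa only [hdepth W₁ hv₁ _ ha, hdepth W₁ hv₁ _ hu] using ha_min u hu
  · simpa only [hdepth W₂ hv₂ _ hb, hdepth W₂ hv₂ _ hu] using hb_min u hu

end SimpleGraph

theorem forest_multicut_integrality_general
    {V : Type*} [Fintype V] [DecidableEq V]
    (F : SimpleGraph V) (hF : F.IsAcyclic)
    {ι : Type*} [Fintype ι] (e₁ e₂ : ι → V)
    (P : ∀ i : ι, F.Walk (e₁ i) (e₂ i))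
    (x : V → ℝ)
    (hx0 : ∀ v, 0 ≤ x v)
    (hcov : ∀ i, 1 ≤ ∑ v ∈ (P i).support.toFinset, x v) :
    ∃ S : Finset V,
      (∀ i, ∃ v ∈ S, v ∈ (P i).support) ∧
      (S.card : ℝ) ≤ ∑ v : V, x v := by
  have hapex (i : ι) : ∃ a ∈ (P i).support, ∀ u ∈ (P i).support, F.depth a ≤ F.depth u := by
    simpa using (P i).support.toFinset.exists_min_image F.depth ⟨e₁ i, by simp⟩
  choose apex hapex_mem hapex_min using hapex
  have hmeet (i j : ι) (hij : ¬Disjoint (P i).support.toFinset (P j).support.toFinset)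
      (hji : F.depth (apex j) ≤ F.depth (apex i)) : apex i ∈ (P j).support.toFinset := by
    obtain ⟨v, hvi, hvj⟩ := not_disjoint_iff.1 hij
    exact List.mem_toFinset.2 <| hF.mem_support_of_forall_depth_le (List.mem_toFinset.1 hvi)
      (List.mem_toFinset.1 hvj) (hapex_mem i) (hapex_mem j) (hapex_min i) (hapex_min j) hji
  obtain ⟨T, -, hT, hcover⟩ := exists_pairwiseDisjoint_subfamily_of_apex_mem
    (fun i => (P i).support.toFinset) apex (F.depth ∘ apex)
    (fun i => List.mem_toFinset.2 (hapex_mem i)) hmeet univ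
  refine ⟨T.image apex, fun i => ?_, ?_⟩
  · obtain ⟨t, ht, hti⟩ := hcover i (mem_univ i)
    exact ⟨apex t, mem_image_of_mem apex ht, List.mem_toFinset.1 hti⟩
  · calc ((T.image apex).card : ℝ) ≤ T.card := by exact_mod_cast card_image_le
      _ ≤ ∑ v, x v := card_le_sum_of_pairwiseDisjoint hT hx0 fun t _ => hcov t

/-- For a forest `F` and a finite family of simple paths, any fractional
multicut solution `x` can be turned into an (integral) multicut `S` with
`|S| ≤ Σ_v x_v`; in particular the unweighted multicut LP on a forest has an integral
optimal solution. -/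
theorem forest_multicut_integrality
    {V : Type*} [Fintype V] [DecidableEq V]
    (F : SimpleGraph V) (hF : F.IsAcyclic)
    {ι : Type*} [Fintype ι] (e₁ e₂ : ι → V)
    (P : ∀ i : ι, F.Walk (e₁ i) (e₂ i)) (hP : ∀ i, (P i).IsPath)
    (x : V → ℝ)
    (hx0 : ∀ v, 0 ≤ x v) (hx1 : ∀ v, x v ≤ 1)
    (hcov : ∀ i, 1 ≤ ∑ v ∈ (P i).support.toFinset, x v) :
    ∃ S : Finset V,
      (∀ i, ∃ v ∈ S, v ∈ (P i).support) ∧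
      (S.card : ℝ) ≤ ∑ v : V, x v :=
  forest_multicut_integrality_general F hF e₁ e₂ P x hx0 hcov
end

section
/- Fix an integer r ≥ 2 and let G be a finite simple graph. Let G' be the graph obtained from G by the following construction (with ℓ = ⌈r/2⌉ + 1): for every edge e = {u,v} of G, delete e and add a path u, a^e_1, a^e_2, …, a^e_{r−1}, v on r−1 new internal vertices; add two new paths P^b_e on vertices b^e_1, …, b^e_ℓ and P^c_e on vertices c^e_1, …, c^e_ℓ together with the edges {a^e_1, b^e_1}, {a^e_{⌊r/2⌋}, b^e_ℓ}, {a^e_{⌈r/2⌉}, c^e_1}, {a^e_{r−1}, c^e_ℓ}; finally add a cycle X on r+1 new vertices x_1, …, x_{r+1} and add the edge {x_1, v} for every original vertex v ∈ V(G). Then every cycle of G' has at least r+1 vertices. -/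
namespace FTFVSHardness

/-- Vertex type of the constructed graph `G'`: original vertices, gadget vertices
(indexed by the oriented edge `p`, a tag `0`/`1`/`2` for the `a`/`b`/`c` paths, and a
positive index), and the cycle vertices `x_1, …, x_{r+1}`. -/
abbrev W (V : Type*) := V ⊕ ((V × V) × ℕ × ℕ) ⊕ ℕ

variable {V : Type*}

/-- An original vertex of `G`. -/
def vo (u : V) : W V := Sum.inl u
/-- The vertex `a^e_i` (for `1 ≤ i ≤ r−1`) of the gadget of the oriented edge `p`. -/
def va (p : V × V) (i : ℕ) : W V := Sum.inr (Sum.inl (p, 0, i))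
/-- The vertex `b^e_j` (for `1 ≤ j ≤ ℓ`) of the gadget of the oriented edge `p`. -/
def vb (p : V × V) (j : ℕ) : W V := Sum.inr (Sum.inl (p, 1, j))
/-- The vertex `c^e_j` (for `1 ≤ j ≤ ℓ`) of the gadget of the oriented edge `p`. -/
def vc (p : V × V) (j : ℕ) : W V := Sum.inr (Sum.inl (p, 2, j))
/-- The vertex `x_k` (for `1 ≤ k ≤ r+1`) of the cycle `X`. -/
def vx (k : ℕ) : W V := Sum.inr (Sum.inr k)

/-- The edge set of the constructed graph `G'`: for each oriented edge `p = (u,v) ∈ D`,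
the path `u, a^e_1, …, a^e_{r−1}, v`, the paths `P^b_e` on `b^e_1, …, b^e_ℓ` and `P^c_e`
on `c^e_1, …, c^e_ℓ`, the connector edges `{a^e_1, b^e_1}`, `{a^e_{⌊r/2⌋}, b^e_ℓ}`,
`{a^e_{⌈r/2⌉}, c^e_1}`, `{a^e_{r−1}, c^e_ℓ}`; the cycle `X` on `x_1, …, x_{r+1}`; and the
edges `{x_1, u}` for every original vertex `u`. -/
def gadgetEdges (r ℓ : ℕ) (D : Set (V × V)) : Set (Sym2 (W V)) :=
  {e | ∃ p ∈ D,
      e = s(vo p.1, va p 1) ∨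
      (∃ i, 1 ≤ i ∧ i + 1 ≤ r - 1 ∧ e = s(va p i, va p (i + 1))) ∨
      e = s(va p (r - 1), vo p.2) ∨
      (∃ j, 1 ≤ j ∧ j + 1 ≤ ℓ ∧ e = s(vb p j, vb p (j + 1))) ∨
      (∃ j, 1 ≤ j ∧ j + 1 ≤ ℓ ∧ e = s(vc p j, vc p (j + 1))) ∨
      e = s(va p 1, vb p 1) ∨ e = s(va p (r / 2), vb p ℓ) ∨
      e = s(va p ((r + 1) / 2), vc p 1) ∨ e = s(va p (r - 1), vc p ℓ)} ∪
  {e | ∃ k, 1 ≤ k ∧ k + 1 ≤ r + 1 ∧ e = s((vx k : W V), vx (k + 1))} ∪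
  {s((vx (r + 1) : W V), vx 1)} ∪
  {e | ∃ u : V, e = s((vx 1 : W V), vo u)}

/-- The constructed graph `G'`. -/
def gadgetGraph (r ℓ : ℕ) (D : Set (V × V)) : SimpleGraph (W V) :=
  SimpleGraph.fromEdgeSet (gadgetEdges r ℓ D)

end FTFVSHardness

/-!
A cycle through an edge `s(a, b)` contains a path from `a` to `b` that avoids this edge, so it
suffices to find, for every edge `s(a, b)` of `G'`, an integer potential which changes by at most
one along every other edge but by at least `r` across `s(a, b)`. Near the edge the potential is,
up to truncation, the distance from one endpoint in `G'` minus the edge; elsewhere it is nearly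
constant, the other gadgets interpolating between the values at their two ends.
-/

lemma abs_sub_eq_of_sym2_eq {α : Type*} {f : α → ℤ} {x y a b : α} (h : s(x, y) = s(a, b)) :
    |f x - f y| = |f a - f b| := by
  rcases Sym2.eq_iff.mp h with ⟨rfl, rfl⟩ | ⟨rfl, rfl⟩
  · rfl
  · exact abs_sub_comm _ _

namespace SimpleGraph

variable {α : Type*} {G : SimpleGraph α}

/-- A certificate that `a` and `b` are at distance at least `n` in `G` minus the edge `s(a, b)`. -/
def IsCutPotential (G : SimpleGraph α) (n : ℕ) (a b : α) (Φ : α → ℤ) : Prop :=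
  (∀ ⦃y z⦄, G.Adj y z → s(y, z) ≠ s(a, b) → |Φ y - Φ z| ≤ 1) ∧ (n : ℤ) ≤ |Φ a - Φ b|

lemma IsCutPotential.of_sym2_eq {n : ℕ} {a b x y : α} {Φ : α → ℤ} (h : s(a, b) = s(x, y))
    (hΦ : G.IsCutPotential n x y Φ) : G.IsCutPotential n a b Φ := by
  refine ⟨h ▸ hΦ.1, ?_⟩
  rw [abs_sub_eq_of_sym2_eq h]
  exact hΦ.2

lemma Walk.abs_sub_le_length {e : Sym2 α} {Φ : α → ℤ}
    (hΦ : ∀ ⦃y z⦄, G.Adj y z → s(y, z) ≠ e → |Φ y - Φ z| ≤ 1) :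
    ∀ {x y : α} (q : G.Walk x y), e ∉ q.edges → |Φ x - Φ y| ≤ q.length
  | _, _, .nil, _ => by simp
  | x, z, .cons (v := y) h q, he => by
    rw [edges_cons, List.mem_cons, not_or] at he
    have hstep := hΦ h (Ne.symm he.1)
    have hrest := q.abs_sub_le_length hΦ he.2
    have htri := abs_sub_le (Φ x) (Φ y) (Φ z)
    rw [length_cons, Nat.cast_succ]
    linarith

lemma Walk.IsCycle.lt_card_support_toFinset [DecidableEq α] {n : ℕ}
    (hcut : ∀ ⦃a b⦄, G.Adj a b → ∃ Φ, G.IsCutPotential n a b Φ)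
    {w : α} {c : G.Walk w w} (hc : c.IsCycle) : n < c.support.toFinset.card := by
  cases c with
  | nil => exact absurd rfl hc.ne_nil
  | @cons _ v _ hadj q =>
    obtain ⟨hq, hne⟩ := (cons_isCycle_iff q hadj).mp hc
    obtain ⟨Φ, hlip, hgap⟩ := hcut hadj
    have hlen := q.abs_sub_le_length hlip hne
    rw [abs_sub_comm] at hlen
    rw [support_cons, List.toFinset_cons,
      Finset.insert_eq_self.mpr (List.mem_toFinset.mpr q.end_mem_support),
      List.toFinset_card_of_nodup hq.support_nodup, length_support]
    omega

end SimpleGraph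

namespace FTFVSHardness

variable {V : Type*}

def piecewisePotential (ov : V → ℤ) (xv : ℕ → ℤ) (fa fb fc : V × V → ℕ → ℤ) : W V → ℤ
  | Sum.inl u => ov u
  | Sum.inr (Sum.inl (q, 0, i)) => fa q i
  | Sum.inr (Sum.inl (q, 1, j)) => fb q j
  | Sum.inr (Sum.inl (q, _ + 2, j)) => fc q j
  | Sum.inr (Sum.inr k) => xv k

section piecewisePotential

variable (ov : V → ℤ) (xv : ℕ → ℤ) (fa fb fc : V × V → ℕ → ℤ)

@[simp] lemma piecewisePotential_vo (u : V) :
    piecewisePotential ov xv fa fb fc (vo u) = ov u := rfl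

@[simp] lemma piecewisePotential_va (q : V × V) (i : ℕ) :
    piecewisePotential ov xv fa fb fc (va q i) = fa q i := rfl

@[simp] lemma piecewisePotential_vb (q : V × V) (j : ℕ) :
    piecewisePotential ov xv fa fb fc (vb q j) = fb q j := rfl

@[simp] lemma piecewisePotential_vc (q : V × V) (j : ℕ) :
    piecewisePotential ov xv fa fb fc (vc q j) = fc q j := rfl

@[simp] lemma piecewisePotential_vx (k : ℕ) :
    piecewisePotential ov xv fa fb fc (vx k) = xv k := rfl

end piecewisePotential

structure IsGadgetLipschitz (r ℓ : ℕ) (e₀ : Sym2 (W V)) (p : V × V) (α β : ℤ)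
    (fa fb fc : ℕ → ℤ) : Prop where
  start : s(vo p.1, va p 1) ≠ e₀ → |α - fa 1| ≤ 1
  a_succ : ∀ i, 1 ≤ i → i + 1 ≤ r - 1 → s(va p i, va p (i + 1)) ≠ e₀ →
    |fa i - fa (i + 1)| ≤ 1
  finish : s(va p (r - 1), vo p.2) ≠ e₀ → |fa (r - 1) - β| ≤ 1
  b_succ : ∀ j, 1 ≤ j → j + 1 ≤ ℓ → s(vb p j, vb p (j + 1)) ≠ e₀ → |fb j - fb (j + 1)| ≤ 1
  c_succ : ∀ j, 1 ≤ j → j + 1 ≤ ℓ → s(vc p j, vc p (j + 1)) ≠ e₀ → |fc j - fc (j + 1)| ≤ 1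
  a_b_first : s(va p 1, vb p 1) ≠ e₀ → |fa 1 - fb 1| ≤ 1
  a_b_last : s(va p (r / 2), vb p ℓ) ≠ e₀ → |fa (r / 2) - fb ℓ| ≤ 1
  a_c_first : s(va p ((r + 1) / 2), vc p 1) ≠ e₀ → |fa ((r + 1) / 2) - fc 1| ≤ 1
  a_c_last : s(va p (r - 1), vc p ℓ) ≠ e₀ → |fa (r - 1) - fc ℓ| ≤ 1

structure IsCycleXLipschitz (r : ℕ) (e₀ : Sym2 (W V)) (ov : V → ℤ) (xv : ℕ → ℤ) : Prop where
  x_succ : ∀ k, 1 ≤ k → k + 1 ≤ r + 1 → s((vx k : W V), vx (k + 1)) ≠ e₀ →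
    |xv k - xv (k + 1)| ≤ 1
  x_close : s((vx (r + 1) : W V), vx 1) ≠ e₀ → |xv (r + 1) - xv 1| ≤ 1
  x_one_vo : ∀ u, s((vx 1 : W V), vo u) ≠ e₀ → |xv 1 - ov u| ≤ 1

lemma abs_piecewisePotential_sub_le_one {r ℓ : ℕ} {D : Set (V × V)} {e₀ : Sym2 (W V)}
    {ov : V → ℤ} {xv : ℕ → ℤ} {fa fb fc : V × V → ℕ → ℤ}
    (hgad : ∀ p ∈ D, IsGadgetLipschitz r ℓ e₀ p (ov p.1) (ov p.2) (fa p) (fb p) (fc p))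
    (hX : IsCycleXLipschitz r e₀ ov xv) ⦃y z : W V⦄ (hyz : (gadgetGraph r ℓ D).Adj y z)
    (hne : s(y, z) ≠ e₀) :
    |piecewisePotential ov xv fa fb fc y - piecewisePotential ov xv fa fb fc z| ≤ 1 := by
  have hm := (gadgetGraph r ℓ D).mem_edgeSet.mpr hyz
  simp only [gadgetGraph, SimpleGraph.edgeSet_fromEdgeSet, Set.mem_sdiff, gadgetEdges,
    Set.mem_union, Set.mem_ofPred_eq, Set.mem_singleton_iff] at hm
  rcases hm.1 with ((⟨p, hp, hE | ⟨i, hi, hi', hE⟩ | hE | ⟨j, hj, hj', hE⟩ | ⟨j, hj, hj', hE⟩ |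
      hE | hE | hE | hE⟩ | ⟨k, hk, hk', hE⟩) | hE) | ⟨u, hE⟩ <;>
    rw [abs_sub_eq_of_sym2_eq hE] <;> rw [hE] at hne
  · exact (hgad p hp).start hne
  · exact (hgad p hp).a_succ i hi hi' hne
  · exact (hgad p hp).finish hne
  · exact (hgad p hp).b_succ j hj hj' hne
  · exact (hgad p hp).c_succ j hj hj' hne
  · exact (hgad p hp).a_b_first hne
  · exact (hgad p hp).a_b_last hne
  · exact (hgad p hp).a_c_first hne
  · exact (hgad p hp).a_c_last hne
  · exact hX.x_succ k hk hk' hne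
  · exact hX.x_close hne
  · exact hX.x_one_vo u hne

/-- Away from the cut edge a gadget with end values `α, β` gets, up to the cap `C`, the least of
the end values plus the distances to the ends; `interpB` and `interpC` do the same from the
attachment points of the `b`- and `c`-paths. -/
def interpA (r : ℕ) (C α β : ℤ) (i : ℕ) : ℤ := min (α + i) (min (β + (r - i)) C)

def interpB (r ℓ : ℕ) (C α β : ℤ) (j : ℕ) : ℤ :=
  min (interpA r C α β 1 + j) (min (interpA r C α β (r / 2) + (ℓ + 1 - j)) C)

def interpC (r ℓ : ℕ) (C α β : ℤ) (j : ℕ) : ℤ :=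
  min (interpA r C α β ((r + 1) / 2) + j) (min (interpA r C α β (r - 1) + (ℓ + 1 - j)) C)

lemma isGadgetLipschitz_interp {r ℓ : ℕ} (hr : 2 ≤ r) (hℓ : ℓ = (r + 1) / 2 + 1)
    (e₀ : Sym2 (W V)) (p : V × V) {C α β : ℤ} (hα : α ≤ C) (hβ : β ≤ C) (hαβ : |α - β| ≤ r) :
    IsGadgetLipschitz r ℓ e₀ p α β (interpA r C α β) (interpB r ℓ C α β)
      (interpC r ℓ C α β) := by
  rw [abs_le] at hαβ
  constructor <;> intros <;> simp only [interpA, interpB, interpC, abs_le] <;> omega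

def cycleXCutPotential (r ℓ : ℕ) (C : ℤ) (ov : V → ℤ) (xv : ℕ → ℤ) : W V → ℤ :=
  piecewisePotential ov xv (fun q => interpA r C (ov q.1) (ov q.2))
    (fun q => interpB r ℓ C (ov q.1) (ov q.2)) (fun q => interpC r ℓ C (ov q.1) (ov q.2))

lemma isCutPotential_cycleXCutPotential {r ℓ : ℕ} (hr : 2 ≤ r) (hℓ : ℓ = (r + 1) / 2 + 1)
    {D : Set (V × V)} {C : ℤ} {ov : V → ℤ} {xv : ℕ → ℤ} {a b : W V}
    (hC : ∀ u, ov u ≤ C) (hov : ∀ u u', |ov u - ov u'| ≤ r)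
    (hX : IsCycleXLipschitz r s(a, b) ov xv)
    (hgap : (r : ℤ) ≤ |cycleXCutPotential r ℓ C ov xv a - cycleXCutPotential r ℓ C ov xv b|) :
    (gadgetGraph r ℓ D).IsCutPotential r a b (cycleXCutPotential r ℓ C ov xv) :=
  ⟨abs_piecewisePotential_sub_le_one
    (fun _ _ => isGadgetLipschitz_interp hr hℓ _ _ (hC _) (hC _) (hov _ _)) hX, hgap⟩

variable {r ℓ : ℕ} {D : Set (V × V)}

lemma exists_cutPotential_x_succ (hr : 2 ≤ r) (hℓ : ℓ = (r + 1) / 2 + 1) {k : ℕ} (hk : 1 ≤ k)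
    (hk' : k + 1 ≤ r + 1) :
    ∃ Φ, (gadgetGraph r ℓ D).IsCutPotential r (vx k) (vx (k + 1)) Φ :=
  ⟨_, isCutPotential_cycleXCutPotential hr hℓ (C := r + 2 - k) (ov := fun _ => r + 2 - k)
    (xv := fun x => if k + 1 ≤ x then x - k - 1 else r + x - k)
    (fun _ => le_rfl) (fun _ _ => by simp)
    (by
      constructor <;> intros <;> rename_i hne <;> simp only [abs_le] <;> (try split_ifs) <;>
        first | omega | (simp [vx] at hne; omega))
    (by simp [cycleXCutPotential])⟩

lemma exists_cutPotential_x_close (hr : 2 ≤ r) (hℓ : ℓ = (r + 1) / 2 + 1) :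
    ∃ Φ, (gadgetGraph r ℓ D).IsCutPotential r (vx (r + 1)) (vx 1) Φ :=
  ⟨_, isCutPotential_cycleXCutPotential hr hℓ (C := 1) (ov := fun _ => 1) (xv := fun x => x - 1)
    (fun _ => le_rfl) (fun _ _ => by simp)
    (by constructor <;> intros <;> simp only [abs_le] <;> first | omega | contradiction)
    (by simp [cycleXCutPotential])⟩

variable [DecidableEq V]

lemma exists_cutPotential_x_one_vo (hr : 2 ≤ r) (hℓ : ℓ = (r + 1) / 2 + 1) (u : V) :
    ∃ Φ, (gadgetGraph r ℓ D).IsCutPotential r (vx 1) (vo u) Φ :=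
  ⟨_, isCutPotential_cycleXCutPotential hr hℓ (C := r + 2)
    (ov := fun x => if x = u then 0 else r) (xv := fun x => if x = 1 then r + 1 else r + 2)
    (fun _ => by split_ifs <;> omega) (fun _ _ => by simp only [abs_le]; split_ifs <;> omega)
    (by
      constructor <;> intros <;> rename_i hne <;> simp only [abs_le] <;> (try split_ifs) <;>
        first | omega | simp_all [vx, vo])
    (by simp [cycleXCutPotential, le_abs])⟩

/-- Every original vertex is adjacent to `x_1`, so outside the gadget of `p` (whose ends get the
values `U` and `V'`) the potential can sit at the level `C = min U V' + 2`, with `x_1` one below. -/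
def gadgetCutPotential (r ℓ : ℕ) (p : V × V) (U V' : ℤ) (fa fb fc : ℕ → ℤ) : W V → ℤ :=
  let C := min U V' + 2
  let ov : V → ℤ := fun u => if u = p.1 then U else if u = p.2 then V' else C
  piecewisePotential ov (fun k => if k = 1 then C - 1 else C)
    (fun q => if q = p then fa else interpA r C (ov q.1) (ov q.2))
    (fun q => if q = p then fb else interpB r ℓ C (ov q.1) (ov q.2))
    (fun q => if q = p then fc else interpC r ℓ C (ov q.1) (ov q.2))

lemma isCutPotential_gadgetCutPotential (hr : 2 ≤ r) (hℓ : ℓ = (r + 1) / 2 + 1)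
    {p : V × V} (hp : p.1 ≠ p.2) {U V' : ℤ} {fa fb fc : ℕ → ℤ} {a b : W V}
    (hUV : |U - V'| ≤ 2) (hgad : IsGadgetLipschitz r ℓ s(a, b) p U V' fa fb fc)
    (hgap : (r : ℤ) ≤ |gadgetCutPotential r ℓ p U V' fa fb fc a -
      gadgetCutPotential r ℓ p U V' fa fb fc b|) :
    (gadgetGraph r ℓ D).IsCutPotential r a b (gadgetCutPotential r ℓ p U V' fa fb fc) := by
  rw [abs_le] at hUV
  refine ⟨abs_piecewisePotential_sub_le_one (fun q _ => ?_) ?_, hgap⟩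
  · by_cases hq : q = p
    · subst hq
      simpa [hp.symm] using hgad
    · simp only [hq, if_false]
      exact isGadgetLipschitz_interp hr hℓ _ _ (by split_ifs <;> omega) (by split_ifs <;> omega)
        (by rw [abs_le]; split_ifs <;> omega)
  · constructor <;> intros <;> simp only [abs_le] <;> split_ifs <;> omega

variable {p : V × V}

lemma exists_cutPotential_start (hr : 2 ≤ r) (hℓ : ℓ = (r + 1) / 2 + 1) (hp : p.1 ≠ p.2) :
    ∃ Φ, (gadgetGraph r ℓ D).IsCutPotential r (vo p.1) (va p 1) Φ :=
  ⟨_, isCutPotential_gadgetCutPotential hr hℓ hp (U := r + 1) (V' := r - 1)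
    (fa := fun x => x - 1)
    (fb := fun j => min j (r / 2 + ℓ - j))
    (fc := fun j => min ((r + 1) / 2 - 1 + j) (r - 1 + ℓ - j))
    (by rw [abs_le]; omega)
    (by constructor <;> intros <;> simp only [abs_le] <;> first | omega | contradiction)
    (by simp [gadgetCutPotential, le_abs])⟩

lemma exists_cutPotential_a_succ_of_lt_half (hr : 2 ≤ r) (hℓ : ℓ = (r + 1) / 2 + 1)
    (hp : p.1 ≠ p.2) {i : ℕ} (hi : 1 ≤ i) (hi' : i + 1 ≤ r / 2) :
    ∃ Φ, (gadgetGraph r ℓ D).IsCutPotential r (va p i) (va p (i + 1)) Φ :=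
  ⟨_, isCutPotential_gadgetCutPotential hr hℓ hp (U := r + 1 - i) (V' := r - 1 - i)
    (fa := fun x => if x ≤ i then r + x - i else x - i - 1)
    (fb := fun j => min (r + 1 - i + j) (r / 2 - i + ℓ - j))
    (fc := fun j => min ((r + 1) / 2 - i - 1 + j) (r - 1 - i + ℓ - j))
    (by rw [abs_le]; omega)
    (by
      constructor <;> intros <;> rename_i hne <;> simp only [abs_le] <;> (try split_ifs) <;>
        first | omega | (simp [va] at hne; omega))
    (by simp [gadgetCutPotential])⟩

lemma exists_cutPotential_a_succ_of_half_le (hr : 2 ≤ r) (hℓ : ℓ = (r + 1) / 2 + 1)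
    (hp : p.1 ≠ p.2) {i : ℕ} (hi : (r + 1) / 2 ≤ i) (hi' : i + 1 ≤ r - 1) :
    ∃ Φ, (gadgetGraph r ℓ D).IsCutPotential r (va p i) (va p (i + 1)) Φ :=
  ⟨_, isCutPotential_gadgetCutPotential hr hℓ hp (U := i) (V' := i + 2)
    (fa := fun x => if x ≤ i then i - x else r + 1 + i - x)
    (fb := fun j => min (i - 1 + j) (i - r / 2 + 1 + ℓ - j))
    (fc := fun j => min (i - (r + 1) / 2 + j) (i + 3 + ℓ - j))
    (by rw [abs_le]; omega)
    (by
      constructor <;> intros <;> rename_i hne <;> simp only [abs_le] <;> (try split_ifs) <;>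
        first | omega | (simp [va] at hne; omega))
    (by simp [gadgetCutPotential, le_abs]; omega)⟩

lemma exists_cutPotential_a_succ_middle (hr : 2 ≤ r) (hℓ : ℓ = (r + 1) / 2 + 1)
    (hp : p.1 ≠ p.2) (hodd : r / 2 + 1 = (r + 1) / 2) :
    ∃ Φ, (gadgetGraph r ℓ D).IsCutPotential r (va p (r / 2)) (va p (r / 2 + 1)) Φ :=
  ⟨_, isCutPotential_gadgetCutPotential hr hℓ hp (U := r / 2 + 2) (V' := r / 2)
    (fa := fun x => if x ≤ r / 2 then r / 2 + 2 + x else x - (r + 1) / 2)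
    (fb := fun j => min (r / 2 + 3 + j) (r + 2 + ℓ - j))
    (fc := fun j => min j (r / 2 + ℓ - j))
    (by rw [abs_le]; omega)
    (by
      constructor <;> intros <;> rename_i hne <;> simp only [abs_le] <;> (try split_ifs) <;>
        first | omega | (simp [va] at hne; omega))
    (by simp [gadgetCutPotential, le_abs]; omega)⟩

lemma exists_cutPotential_a_succ (hr : 2 ≤ r) (hℓ : ℓ = (r + 1) / 2 + 1) (hp : p.1 ≠ p.2)
    {i : ℕ} (hi : 1 ≤ i) (hi' : i + 1 ≤ r - 1) :
    ∃ Φ, (gadgetGraph r ℓ D).IsCutPotential r (va p i) (va p (i + 1)) Φ := by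
  by_cases hlt : i + 1 ≤ r / 2
  · exact exists_cutPotential_a_succ_of_lt_half hr hℓ hp hi hlt
  by_cases hle : (r + 1) / 2 ≤ i
  · exact exists_cutPotential_a_succ_of_half_le hr hℓ hp hle hi'
  obtain rfl : i = r / 2 := by omega
  exact exists_cutPotential_a_succ_middle hr hℓ hp (by omega)

lemma exists_cutPotential_finish (hr : 2 ≤ r) (hℓ : ℓ = (r + 1) / 2 + 1) (hp : p.1 ≠ p.2) :
    ∃ Φ, (gadgetGraph r ℓ D).IsCutPotential r (va p (r - 1)) (vo p.2) Φ :=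
  ⟨_, isCutPotential_gadgetCutPotential hr hℓ hp (U := r - 1) (V' := r + 1)
    (fa := fun x => r - 1 - x)
    (fb := fun j => min (r - 2 + j) ((r + 1) / 2 + ℓ - j))
    (fc := fun j => min (r / 2 - 1 + j) (ℓ + 1 - j))
    (by rw [abs_le]; omega)
    (by constructor <;> intros <;> simp only [abs_le] <;> first | omega | contradiction)
    (by simp [gadgetCutPotential, hp.symm, le_abs]; omega)⟩

lemma exists_cutPotential_b_succ (hr : 2 ≤ r) (hℓ : ℓ = (r + 1) / 2 + 1) (hp : p.1 ≠ p.2)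
    {k : ℕ} (hk : 1 ≤ k) (hk' : k + 1 ≤ ℓ) :
    ∃ Φ, (gadgetGraph r ℓ D).IsCutPotential r (vb p k) (vb p (k + 1)) Φ :=
  ⟨_, isCutPotential_gadgetCutPotential hr hℓ hp (U := ℓ - k + r / 2) (V' := ℓ - k + (r + 1) / 2)
    (fa := fun x => if x ≤ r / 2 then ℓ - k + r / 2 - x else ℓ - k + x - r / 2)
    (fb := fun j => if k + 1 ≤ j then j - k - 1 else ℓ - k + r / 2 + j - 1)
    (fc := fun j => min (ℓ - k + (r + 1) / 2 - r / 2 + j) (ℓ - k + (r + 1) / 2 + ℓ - j))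
    (by rw [abs_le]; omega)
    (by
      constructor <;> intros <;> rename_i hne <;> simp only [abs_le] <;> (try split_ifs) <;>
        first | omega | (simp [vb] at hne; omega))
    (by simp [gadgetCutPotential, le_abs]; omega)⟩

lemma exists_cutPotential_c_succ (hr : 2 ≤ r) (hℓ : ℓ = (r + 1) / 2 + 1) (hp : p.1 ≠ p.2)
    {k : ℕ} (hk : 1 ≤ k) (hk' : k + 1 ≤ ℓ) :
    ∃ Φ, (gadgetGraph r ℓ D).IsCutPotential r (vc p k) (vc p (k + 1)) Φ :=
  ⟨_, isCutPotential_gadgetCutPotential hr hℓ hp (U := ℓ - k + min (r - 1) 3) (V' := ℓ - k + 1)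
    (fa := fun x => min (ℓ - k + r - 1 - x) (ℓ - k + min (r - 1) 3 + x))
    (fb := fun j => min (min (ℓ - k + r - 2) (ℓ - k + min (r - 1) 3 + 1) + j)
      (min (ℓ - k + (r + 1) / 2 - 1) (ℓ - k + min (r - 1) 3 + r / 2) + 1 + ℓ - j))
    (fc := fun j => if k + 1 ≤ j then j - k - 1 else ℓ - k + r / 2 - 1 + j)
    (by rw [abs_le]; omega)
    (by
      constructor <;> intros <;> rename_i hne <;> simp only [abs_le] <;> (try split_ifs) <;>
        first | omega | (simp [vc] at hne; omega))
    (by simp [gadgetCutPotential, le_abs]; omega)⟩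

lemma exists_cutPotential_a_b_first (hr : 2 ≤ r) (hℓ : ℓ = (r + 1) / 2 + 1) (hp : p.1 ≠ p.2) :
    ∃ Φ, (gadgetGraph r ℓ D).IsCutPotential r (va p 1) (vb p 1) Φ :=
  ⟨_, isCutPotential_gadgetCutPotential hr hℓ hp (U := ℓ + r / 2) (V' := ℓ + (r + 1) / 2)
    (fa := fun x => if x ≤ r / 2 then ℓ + r / 2 - x else ℓ + x - r / 2)
    (fb := fun j => j - 1)
    (fc := fun j => min (ℓ + (r + 1) / 2 - r / 2 + j) (ℓ + (r + 1) / 2 + ℓ - j))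
    (by rw [abs_le]; omega)
    (by
      constructor <;> intros <;> simp only [abs_le] <;> (try split_ifs) <;>
        first | omega | contradiction)
    (by simp [gadgetCutPotential, le_abs]; omega)⟩

lemma exists_cutPotential_a_b_last (hr : 2 ≤ r) (hℓ : ℓ = (r + 1) / 2 + 1) (hp : p.1 ≠ p.2) :
    ∃ Φ, (gadgetGraph r ℓ D).IsCutPotential r (va p (r / 2)) (vb p ℓ) Φ :=
  ⟨_, isCutPotential_gadgetCutPotential hr hℓ hp (U := ℓ + 1) (V' := ℓ + min (r - 1) 3)
    (fa := fun x => min (ℓ + x - 1) (ℓ + min (r - 1) 3 + r - x))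
    (fb := fun j => ℓ - j)
    (fc := fun j => min (min (ℓ + (r + 1) / 2 - 1) (ℓ + min (r - 1) 3 + r / 2) + j)
      (min (ℓ + r - 2) (ℓ + min (r - 1) 3 + 1) + 1 + ℓ - j))
    (by rw [abs_le]; omega)
    (by constructor <;> intros <;> simp only [abs_le] <;> first | omega | contradiction)
    (by simp [gadgetCutPotential, le_abs]; omega)⟩

lemma exists_cutPotential_a_c_first (hr : 2 ≤ r) (hℓ : ℓ = (r + 1) / 2 + 1) (hp : p.1 ≠ p.2) :
    ∃ Φ, (gadgetGraph r ℓ D).IsCutPotential r (va p ((r + 1) / 2)) (vc p 1) Φ :=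
  ⟨_, isCutPotential_gadgetCutPotential hr hℓ hp (U := ℓ + min (r - 1) 3) (V' := ℓ + 1)
    (fa := fun x => min (ℓ + r - x - 1) (ℓ + min (r - 1) 3 + x))
    (fb := fun j => min (min (ℓ + r - 2) (ℓ + min (r - 1) 3 + 1) + j)
      (min (ℓ + (r + 1) / 2 - 1) (ℓ + min (r - 1) 3 + r / 2) + 1 + ℓ - j))
    (fc := fun j => j - 1)
    (by rw [abs_le]; omega)
    (by constructor <;> intros <;> simp only [abs_le] <;> first | omega | contradiction)
    (by simp [gadgetCutPotential, le_abs]; omega)⟩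

lemma exists_cutPotential_a_c_last (hr : 2 ≤ r) (hℓ : ℓ = (r + 1) / 2 + 1) (hp : p.1 ≠ p.2) :
    ∃ Φ, (gadgetGraph r ℓ D).IsCutPotential r (va p (r - 1)) (vc p ℓ) Φ :=
  ⟨_, isCutPotential_gadgetCutPotential hr hℓ hp (U := ℓ + (r + 1) / 2) (V' := ℓ + r / 2)
    (fa := fun x => if x ≤ (r + 1) / 2 then ℓ + (r + 1) / 2 - x else ℓ + x - (r + 1) / 2)
    (fb := fun j => min (ℓ + (r + 1) / 2 - 1 + j) (ℓ + (r + 1) / 2 - r / 2 + 1 + ℓ - j))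
    (fc := fun j => ℓ - j)
    (by rw [abs_le]; omega)
    (by
      constructor <;> intros <;> simp only [abs_le] <;> (try split_ifs) <;>
        first | omega | contradiction)
    (by simp [gadgetCutPotential, le_abs]; omega)⟩

lemma exists_cutPotential_of_adj (hr : 2 ≤ r) (hℓ : ℓ = (r + 1) / 2 + 1)
    (hD : ∀ p ∈ D, p.1 ≠ p.2) ⦃a b : W V⦄ (hab : (gadgetGraph r ℓ D).Adj a b) :
    ∃ Φ, (gadgetGraph r ℓ D).IsCutPotential r a b Φ := by
  have hm := (gadgetGraph r ℓ D).mem_edgeSet.mpr hab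
  simp only [gadgetGraph, SimpleGraph.edgeSet_fromEdgeSet, Set.mem_sdiff, gadgetEdges,
    Set.mem_union, Set.mem_ofPred_eq, Set.mem_singleton_iff] at hm
  rcases hm.1 with ((⟨p, hp, hE | ⟨i, hi, hi', hE⟩ | hE | ⟨j, hj, hj', hE⟩ | ⟨j, hj, hj', hE⟩ |
      hE | hE | hE | hE⟩ | ⟨k, hk, hk', hE⟩) | hE) | ⟨u, hE⟩ <;>
    refine Exists.imp (fun Φ => SimpleGraph.IsCutPotential.of_sym2_eq hE) ?_
  · exact exists_cutPotential_start hr hℓ (hD p hp)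
  · exact exists_cutPotential_a_succ hr hℓ (hD p hp) hi hi'
  · exact exists_cutPotential_finish hr hℓ (hD p hp)
  · exact exists_cutPotential_b_succ hr hℓ (hD p hp) hj hj'
  · exact exists_cutPotential_c_succ hr hℓ (hD p hp) hj hj'
  · exact exists_cutPotential_a_b_first hr hℓ (hD p hp)
  · exact exists_cutPotential_a_b_last hr hℓ (hD p hp)
  · exact exists_cutPotential_a_c_first hr hℓ (hD p hp)
  · exact exists_cutPotential_a_c_last hr hℓ (hD p hp)
  · exact exists_cutPotential_x_succ hr hℓ hk hk'
  · exact exists_cutPotential_x_close hr hℓ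
  · exact exists_cutPotential_x_one_vo hr hℓ u

theorem every_cycle_of_gadgetGraph_long_general
    {V : Type*} [DecidableEq V]
    (r : ℕ) (hr : 2 ≤ r) (G : SimpleGraph V)
    (ℓ : ℕ) (hℓ : ℓ = (r + 1) / 2 + 1)
    (D : Set (V × V))
    (hD1 : ∀ p ∈ D, G.Adj p.1 p.2) :
    ∀ ⦃w : W V⦄ (c : (gadgetGraph r ℓ D).Walk w w), c.IsCycle →
      r + 1 ≤ c.support.toFinset.card :=
  fun _ _ hc => hc.lt_card_support_toFinset
    (exists_cutPotential_of_adj hr hℓ fun p hp => (hD1 p hp).ne)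

/-- For `r ≥ 2`, `ℓ = ⌈r/2⌉ + 1` and `D` an orientation of the edges of a
finite simple graph `G`, every cycle of the constructed graph `G'` has at least `r + 1`
vertices. -/
theorem every_cycle_of_gadgetGraph_long
    {V : Type*} [Fintype V] [DecidableEq V]
    (r : ℕ) (hr : 2 ≤ r) (G : SimpleGraph V)
    (ℓ : ℕ) (hℓ : ℓ = (r + 1) / 2 + 1)
    (D : Set (V × V))
    (hD1 : ∀ p ∈ D, G.Adj p.1 p.2)
    (hD2 : ∀ u v : V, G.Adj u v → (u, v) ∈ D ∨ (v, u) ∈ D)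
    (hD3 : ∀ u v : V, (u, v) ∈ D → (v, u) ∉ D) :
    ∀ ⦃w : W V⦄ (c : (gadgetGraph r ℓ D).Walk w w), c.IsCycle →
      r + 1 ≤ c.support.toFinset.card :=
  every_cycle_of_gadgetGraph_long_general r hr G ℓ hℓ D hD1

end FTFVSHardness
end

section
/- Let G be a finite simple graph with distinguished vertices s and t, let C be a cycle in G, and let a ≠ b be vertices of C that form a local s-t pair for C. Then for every set T ⊆ V(G) with T ∩ (V(C) \ {a,b}) = ∅, T is not a tracking set for G; that is, there exist two distinct simple s-t paths P_1 ≠ P_2 in G whose tracker sequences with respect to T are equal. -/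
/-- The tracker sequence of a walk `p` with respect to a tracker set `T`: the subsequence of
the vertex sequence of `p` consisting of the vertices lying in `T`. -/
def trackerSeq {V : Type*} [DecidableEq V] {G : SimpleGraph V} {s t : V}
    (T : Finset V) (p : G.Walk s t) : List V :=
  p.support.filter (· ∈ T)

/-- `T` is a tracking set for `G` (with source `s` and target `t`) if any two distinct
simple `s`-`t` paths have distinct tracker sequences. -/
def IsTrackingSet {V : Type*} [DecidableEq V] (G : SimpleGraph V) (s t : V)
    (T : Finset V) : Prop :=
  ∀ P₁ P₂ : G.Walk s t, P₁.IsPath → P₂.IsPath → trackerSeq T P₁ = trackerSeq T P₂ → P₁ = P₂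

/-- Vertices `a, b` of a subgraph with vertex set `U` form a local `s`-`t` pair for it if
there are simple paths `P_sa` from `s` to `a` and `P_bt` from `b` to `t` in `G` with
`V(P_sa) ∩ V(P_bt) = ∅`, `V(P_sa) ∩ U = {a}` and `V(P_bt) ∩ U = {b}`. -/
def LocalSTPair {V : Type*} (G : SimpleGraph V) (s t : V) (U : Set V) (a b : V) : Prop :=
  a ∈ U ∧ b ∈ U ∧
  ∃ (Psa : G.Walk s a) (Pbt : G.Walk b t),
    Psa.IsPath ∧ Pbt.IsPath ∧
    {v | v ∈ Psa.support} ∩ {v | v ∈ Pbt.support} = (∅ : Set V) ∧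
    {v | v ∈ Psa.support} ∩ U = {a} ∧
    {v | v ∈ Pbt.support} ∩ U = {b}

/-!
Rotate the cycle to start at `a` and cut it at `b`: this gives two distinct `a`-`b` paths inside
the cycle. Each of them can be spliced between `P_sa` and `P_bt`, and because the only vertices
on the cycle that can lie in `T` are `a` and `b`, the two resulting `s`-`t` paths pass through
the same trackers in the same order.
-/

open SimpleGraph

theorem List.filter_eq_filter_singleton {α : Type*} [DecidableEq α] {l : List α} {b : α}
    {p : α → Bool} (hl : l.Nodup) (hb : b ∈ l) (h : ∀ x ∈ l, p x → x = b) :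
    l.filter p = [b].filter p := by
  cases hpb : p b
  · rw [List.filter_singleton, hpb, cond_false, List.filter_eq_nil_iff]
    exact fun x hx hpx => by simp [h x hx hpx, hpb] at hpx
  · calc l.filter p = l.filter (· == b) := List.filter_congr fun x hx => by
          by_cases hxb : x = b
          · simp [hxb, hpb]
          · rw [beq_false_of_ne hxb]
            exact Bool.eq_false_iff.mpr fun hpx => hxb (h x hx hpx)
      _ = [b] := by rw [List.filter_beq, List.count_eq_one_of_mem hl hb]; rfl
      _ = [b].filter p := by simp [hpb]

namespace SimpleGraph.Walk

variable {V : Type*} {G : SimpleGraph V}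

theorem IsPath.append {u v w : V} {p : G.Walk u v} {q : G.Walk v w} (hp : p.IsPath)
    (hq : q.IsPath) (h : ∀ x ∈ p.support, x ∈ q.support → x = v) : (p.append q).IsPath := by
  have hq' := List.nodup_cons.mp (q.cons_tail_support ▸ hq.support_nodup)
  rw [isPath_def, support_append, List.nodup_append]
  refine ⟨hp.support_nodup, hq'.2, ?_⟩
  rintro x hx y hy rfl
  exact hq'.1 (h x hx (List.mem_of_mem_tail hy) ▸ hy)

theorem append_left_cancel {u v w : V} {p : G.Walk u v} {q q' : G.Walk v w}
    (h : p.append q = p.append q') : q = q' := by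
  have h' := congrArg support h
  rw [support_append, support_append] at h'
  exact ext_support (by rw [← q.cons_tail_support, ← q'.cons_tail_support,
    List.append_cancel_left h'])

theorem append_right_cancel {u v w : V} {p p' : G.Walk u v} {q : G.Walk v w}
    (h : p.append q = p'.append q) : p = p' := by
  have h' := congrArg support h
  rw [support_append, support_append] at h'
  exact ext_support (List.append_cancel_right h')

section Cycle

variable [DecidableEq V] {u v w : V} {c : G.Walk u u}

theorem IsCycle.isPath_reverse_dropUntil (hc : c.IsCycle) (hv : v ∈ c.support) (huv : u ≠ v) :
    (c.dropUntil v hv).reverse.IsPath := by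
  rw [← take_spec c hv] at hc
  exact (hc.isPath_of_append_right (not_nil_of_ne huv)).reverse

/-- The two arcs are edge-disjoint, so if they coincided they would have no edges. -/
theorem IsCycle.takeUntil_ne_reverse_dropUntil (hc : c.IsCycle) (hv : v ∈ c.support)
    (huv : u ≠ v) : c.takeUntil v hv ≠ (c.dropUntil v hv).reverse := by
  intro heq
  have hdisj := hc.isTrail.disjoint_edges_takeUntil_dropUntil hv
  rw [← reverse_reverse (c.dropUntil v hv), ← heq, edges_reverse,
    List.disjoint_reverse_right] at hdisj
  exact huv (edges_eq_nil.mp (List.eq_nil_iff_forall_not_mem.mpr fun e he => hdisj he he)).eq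

theorem IsCycle.exists_ne_isPath_of_mem_support {c : G.Walk w w} (hc : c.IsCycle)
    (hu : u ∈ c.support) (hv : v ∈ c.support) (huv : u ≠ v) :
    ∃ p q : G.Walk u v, p ≠ q ∧ p.IsPath ∧ q.IsPath ∧
      p.support ⊆ c.support ∧ q.support ⊆ c.support := by
  have hc' := hc.rotate hu
  have hv' : v ∈ (c.rotate u hu).support := (mem_support_rotate_iff c u hu).mpr hv
  refine ⟨_, _, hc'.takeUntil_ne_reverse_dropUntil hv' huv, hc'.isPath_takeUntil hv',
    hc'.isPath_reverse_dropUntil hv' huv, fun x hx => ?_, fun x hx => ?_⟩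
  · exact (mem_support_rotate_iff c u hu).mp (support_takeUntil_subset_support _ hv' hx)
  · rw [support_reverse, List.mem_reverse] at hx
    exact (mem_support_rotate_iff c u hu).mp (support_dropUntil_subset_support _ hv' hx)

end Cycle

theorem isPath_append_append {s a b t : V} {p : G.Walk s a} {q : G.Walk a b} {r : G.Walk b t}
    (hp : p.IsPath) (hq : q.IsPath) (hr : r.IsPath)
    (hpq : ∀ x ∈ p.support, x ∈ q.support → x = a)
    (hqr : ∀ x ∈ q.support, x ∈ r.support → x = b)
    (hpr : ∀ x ∈ p.support, x ∉ r.support) : ((p.append q).append r).IsPath := by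
  refine (hp.append hq hpq).append hr fun x hx hxr => ?_
  rcases (mem_support_append_iff p q).mp hx with hxp | hxq
  · exact absurd hxr (hpr x hxp)
  · exact hqr x hxq hxr

end SimpleGraph.Walk

section Tracker

variable {V : Type*} [DecidableEq V] {G : SimpleGraph V}

theorem trackerSeq_append {u v w : V} (T : Finset V) (p : G.Walk u v) (q : G.Walk v w) :
    trackerSeq T (p.append q) = trackerSeq T p ++ q.support.tail.filter (· ∈ T) := by
  rw [trackerSeq, trackerSeq, Walk.support_append, List.filter_append]

theorem filter_tail_support_eq_of_untracked {a b : V} {p : G.Walk a b} (hp : p.IsPath)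
    (hab : a ≠ b) {U : Set V} (hpU : ∀ x ∈ p.support, x ∈ U) {T : Finset V}
    (hT : ↑T ∩ (U \ {a, b}) = (∅ : Set V)) :
    p.support.tail.filter (· ∈ T) = [b].filter (· ∈ T) := by
  have hnd := List.nodup_cons.mp (p.cons_tail_support ▸ hp.support_nodup)
  refine List.filter_eq_filter_singleton hnd.2 (p.end_mem_tail_support_of_ne hab) ?_
  intro x hx hxT
  by_contra hxb
  have hxa : x ≠ a := fun hxa => hnd.1 (hxa ▸ hx)
  refine Set.eq_empty_iff_forall_notMem.mp hT x ⟨of_decide_eq_true hxT, ?_, ?_⟩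
  · exact hpU x (List.mem_of_mem_tail hx)
  · simp [hxa, hxb]

end Tracker

theorem not_trackingSet_of_untracked_cycle_general
    {V : Type*} [DecidableEq V]
    (G : SimpleGraph V) (s t : V)
    {v : V} (C : G.Walk v v) (hC : C.IsCycle)
    (a b : V) (hab : a ≠ b)
    (hloc : LocalSTPair G s t {x | x ∈ C.support} a b)
    (T : Finset V)
    (hT : ↑T ∩ ({x | x ∈ C.support} \ {a, b}) = (∅ : Set V)) :
    ∃ P₁ P₂ : G.Walk s t, P₁.IsPath ∧ P₂.IsPath ∧ P₁ ≠ P₂ ∧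
      trackerSeq T P₁ = trackerSeq T P₂ := by
  obtain ⟨haC, hbC, Psa, Pbt, hPsa, hPbt, hdisj, hsa, hbt⟩ := hloc
  obtain ⟨W₁, W₂, hne, hW₁, hW₂, hW₁C, hW₂C⟩ :=
    hC.exists_ne_isPath_of_mem_support haC hbC hab
  have hroute : ∀ W : G.Walk a b, W.IsPath → W.support ⊆ C.support →
      ((Psa.append W).append Pbt).IsPath := fun W hW hWC =>
    Walk.isPath_append_append hPsa hW hPbt
      (fun x hx hxW => (hsa.subset ⟨hx, hWC hxW⟩ : x ∈ ({a} : Set V)))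
      (fun x hxW hx => (hbt.subset ⟨hx, hWC hxW⟩ : x ∈ ({b} : Set V)))
      (fun x hx hx' => (hdisj.subset ⟨hx, hx'⟩ : x ∈ (∅ : Set V)))
  have htrack : ∀ W : G.Walk a b, W.IsPath → W.support ⊆ C.support →
      trackerSeq T ((Psa.append W).append Pbt) =
        trackerSeq T Psa ++ [b].filter (· ∈ T) ++ Pbt.support.tail.filter (· ∈ T) :=
    fun W hW hWC => by
      rw [trackerSeq_append, trackerSeq_append,
        filter_tail_support_eq_of_untracked hW hab (fun x hx => hWC hx) hT]
  refine ⟨_, _, hroute W₁ hW₁ hW₁C, hroute W₂ hW₂ hW₂C, fun h => hne ?_, ?_⟩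
  · exact Walk.append_left_cancel (Walk.append_right_cancel h)
  · rw [htrack W₁ hW₁ hW₁C, htrack W₂ hW₂ hW₂C]

/-- If a cycle `C` of `G` has a local `s`-`t` pair `a ≠ b` and
`T ∩ (V(C) \ {a,b}) = ∅`, then `T` is not a tracking set: there are two distinct simple
`s`-`t` paths with equal tracker sequences. -/
theorem not_trackingSet_of_untracked_cycle
    {V : Type*} [Fintype V] [DecidableEq V]
    (G : SimpleGraph V) (s t : V)
    {v : V} (C : G.Walk v v) (hC : C.IsCycle)
    (a b : V) (hab : a ≠ b)
    (hloc : LocalSTPair G s t {x | x ∈ C.support} a b)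
    (T : Finset V)
    (hT : ↑T ∩ ({x | x ∈ C.support} \ {a, b}) = (∅ : Set V)) :
    ∃ P₁ P₂ : G.Walk s t, P₁.IsPath ∧ P₂.IsPath ∧ P₁ ≠ P₂ ∧
      trackerSeq T P₁ = trackerSeq T P₂ :=
  not_trackingSet_of_untracked_cycle_general G s t C hC a b hab hloc T hT
end
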